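/- Let X be a real Banach space and T : X ⇉ X* a maximal monotone operator of type (NI), and assume that for every h ∈ F_T the conjugate h* majorizes the duality product on X* × X**. If (y**, y*) lies in the Gossez closure of T and h ∈ F_T, then h**(y**, y*) = ⟨y*, y**⟩, where h** is the Fenchel biconjugate of h on X** × X*. -/

import Mathlib

open Filter Topology NormedSpace

noncomputable section

/-- Convexity for extended-real-valued functions. -/
def ConvexFn {E : Type*} [AddCommMonoid E] [SMul ℝ E] (f : E → EReal) : Prop :=
  ∀ x y : E, ∀ a b : ℝ, 0 ≤ a → 0 ≤ b → a + b = 1 →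
    f (a • x + b • y) ≤ (a : EReal) * f x + (b : EReal) * f y

/-- Properness: not identically `⊤` and never `⊥`. -/
def ProperFn {E : Type*} (f : E → EReal) : Prop :=
  (∃ x, f x ≠ ⊤) ∧ ∀ x, f x ≠ ⊥

variable {X : Type*} [NormedAddCommGroup X] [NormedSpace ℝ X]

/-- Fenchel conjugate of `f : X × X* → EReal` with respect to the pairing
`⟨(x,x*),(y*,y**)⟩ = ⟨x,y*⟩ + ⟨x*,y**⟩`, yielding a function on `X* × X**`. -/
def pconj (f : X × StrongDual ℝ X → EReal) : StrongDual ℝ X × StrongDual ℝ (StrongDual ℝ X) → EReal :=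
  fun p => ⨆ q : X × StrongDual ℝ X, ((p.1 q.1 + p.2 q.2 : ℝ) : EReal) - f q

/-- Fenchel conjugate of `g : X* × X** → EReal` with respect to the pairing
`⟨(y*,y**),(x**,x*)⟩ = ⟨y*,x**⟩ + ⟨x*,y**⟩`, yielding a function on `X** × X*`. -/
def pconj2 (g : StrongDual ℝ X × StrongDual ℝ (StrongDual ℝ X) → EReal) :
    StrongDual ℝ (StrongDual ℝ X) × StrongDual ℝ X → EReal :=
  fun p => ⨆ q : StrongDual ℝ X × StrongDual ℝ (StrongDual ℝ X), ((p.1 q.1 + q.2 p.2 : ℝ) : EReal) - g q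

/-- Monotonicity of a point-to-set operator `T : X ⇉ X*`, viewed as its graph. -/
def IsMonotoneOp (T : Set (X × StrongDual ℝ X)) : Prop :=
  ∀ p ∈ T, ∀ q ∈ T, 0 ≤ (p.2 - q.2) (p.1 - q.1)

/-- Maximal monotonicity of `T : X ⇉ X*`. -/
def IsMaxMonotoneOp (T : Set (X × StrongDual ℝ X)) : Prop :=
  IsMonotoneOp T ∧ ∀ S : Set (X × StrongDual ℝ X), IsMonotoneOp S → T ⊆ S → S = T

/-- The Fitzpatrick function of `T`. -/
def fitz (T : Set (X × StrongDual ℝ X)) : X × StrongDual ℝ X → EReal :=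
  fun p => ⨆ q : T, ((p.2 q.1.1 + q.1.2 p.1 - q.1.2 q.1.1 : ℝ) : EReal)

/-- Membership in the Fitzpatrick family of `T`. -/
def InFitzFam (T : Set (X × StrongDual ℝ X)) (h : X × StrongDual ℝ X → EReal) : Prop :=
  ConvexFn h ∧ LowerSemicontinuous h ∧
    (∀ p : X × StrongDual ℝ X, ((p.2 p.1 : ℝ) : EReal) ≤ h p) ∧
    ∀ p ∈ T, h p = ((p.2 p.1 : ℝ) : EReal)

/-- Simons' condition (NI): `inf_{(y,y*)∈T} ⟨y* − x*, y − x**⟩ ≤ 0` for all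
`(x*, x**) ∈ X* × X**`. -/
def IsNI (T : Set (X × StrongDual ℝ X)) : Prop :=
  ∀ (xs : StrongDual ℝ X) (xss : StrongDual ℝ (StrongDual ℝ X)),
    (⨅ q : T, ((q.1.2 q.1.1 - xs q.1.1 - xss q.1.2 + xss xs : ℝ) : EReal)) ≤ 0

/-- Gossez's monotone closure of `T` in `X** × X*`. -/
def gossezClosure (T : Set (X × StrongDual ℝ X)) : Set (StrongDual ℝ (StrongDual ℝ X) × StrongDual ℝ X) :=
  {p | ∀ q ∈ T, 0 ≤ p.1 (p.2 - q.2) - (p.2 - q.2) q.1}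

private lemma aux_lim {H A : ℝ} (f : ℝ → ℝ) (hf : Continuous f) (h0 : f 0 = A)
    (hle : ∀ t : ℝ, 0 < t → t ≤ 1/2 → f t ≤ H) : A ≤ H := by
  have h1 : Tendsto f (𝓝[>] (0:ℝ)) (𝓝 A) := by
    rw [← h0]
    exact (hf.tendsto 0).mono_left nhdsWithin_le_nhds
  refine le_of_tendsto h1 ?_
  filter_upwards [Ioc_mem_nhdsGT_of_mem (by norm_num : (0:ℝ) ∈ Set.Ico (0:ℝ) (1/2))] with t ht
  exact hle t ht.1 ht.2

private lemma aux_sub {a c : ℝ} {b : EReal} (h : ((a - c : ℝ) : EReal) ≤ b) :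
    (a : EReal) - b ≤ (c : EReal) := by
  induction b using EReal.rec with
  | bot => exact absurd (le_bot_iff.mp h) (EReal.coe_ne_bot _)
  | coe r =>
      rw [EReal.coe_le_coe_iff] at h
      rw [← EReal.coe_sub, EReal.coe_le_coe_iff]
      linarith
  | top => simp

private lemma key_L1 {X : Type*} [NormedAddCommGroup X] [NormedSpace ℝ X]
    (T : Set (X × StrongDual ℝ X)) (hni : IsNI T)
    (h : X × StrongDual ℝ X → EReal) (hh : InFitzFam T h)
    (p : StrongDual ℝ (StrongDual ℝ X) × StrongDual ℝ X)
    (hp : ∀ q ∈ T, 0 ≤ p.1 (p.2 - q.2) - (p.2 - q.2) q.1)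
    (z : X) (zs : StrongDual ℝ X) :
    ((p.2 z + p.1 zs - p.1 p.2 : ℝ) : EReal) ≤ h (z, zs) := by
  obtain ⟨hcv, -, hge, heq⟩ := hh
  by_cases htop : h (z, zs) = ⊤
  · rw [htop]; exact le_top
  have hbot : h (z, zs) ≠ ⊥ := by
    intro hb
    have := hge (z, zs)
    rw [hb] at this
    exact EReal.coe_ne_bot _ (le_bot_iff.mp this)
  have hH : h (z, zs) = (((h (z, zs)).toReal : ℝ) : EReal) := (EReal.coe_toReal htop hbot).symm
  set H : ℝ := (h (z, zs)).toReal with hHdef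
  rw [hH, EReal.coe_le_coe_iff]
  have hb : ∀ t : ℝ, 0 < t → t ≤ 1 → ∀ ε : ℝ, 0 < ε → ∃ x xs, (x, xs) ∈ T ∧
      (1-t)*(p.2 z + p.1 zs - p.1 p.2) + t*(zs z) - ε < xs z + zs x - xs x := by
    intro t ht ht1 ε hε
    have h0 := hni ((1-t) • p.2 + t • zs) ((1-t) • p.1 + t • (inclusionInDoubleDual ℝ X z))
    have h1 : (⨅ q : T, ((q.1.2 q.1.1 - ((1-t) • p.2 + t • zs) q.1.1
        - ((1-t) • p.1 + t • (inclusionInDoubleDual ℝ X z)) q.1.2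
        + ((1-t) • p.1 + t • (inclusionInDoubleDual ℝ X z)) ((1-t) • p.2 + t • zs) : ℝ) : EReal))
        < ((t*ε : ℝ) : EReal) := by
      refine lt_of_le_of_lt h0 ?_
      have : (0:ℝ) < t*ε := mul_pos ht hε
      exact_mod_cast this
    obtain ⟨⟨⟨x, xs⟩, hxT⟩, hq⟩ := iInf_lt_iff.mp h1
    rw [EReal.coe_lt_coe_iff] at hq
    refine ⟨x, xs, hxT, ?_⟩
    have hg : p.2 x + p.1 xs - xs x ≤ p.1 p.2 := by
      have := hp (x, xs) hxT
      simp only [map_sub, ContinuousLinearMap.sub_apply] at this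
      linarith
    simp only [ContinuousLinearMap.add_apply, ContinuousLinearMap.smul_apply, smul_eq_mul,
      map_add, map_smul, NormedSpace.dual_def] at hq
    have h1t : (0:ℝ) ≤ 1 - t := by linarith
    have key : t * ((1-t)*(p.2 z + p.1 zs - p.1 p.2) + t*(zs z) - ε)
        < t * (xs z + zs x - xs x) := by
      nlinarith [mul_nonneg h1t (by linarith : (0:ℝ) ≤ p.1 p.2 - (p.2 x + p.1 xs - xs x)), hq]
    exact (mul_lt_mul_iff_right₀ ht).mp key
  have ha : ∀ x xs, (x, xs) ∈ T → ∀ t : ℝ, 0 < t → t ≤ 1 →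
      (1-t)*(xs z + zs x - xs x) + t*(zs z) ≤ H := by
    intro x xs hxT t ht ht1
    have hcx := hcv (x, xs) (z, zs) (1-t) t (by linarith) ht.le (by ring)
    rw [heq _ hxT, hH] at hcx
    have hlow := hge ((1-t) • ((x, xs) : X × StrongDual ℝ X) + t • ((z, zs) : X × StrongDual ℝ X))
    have hcomb := le_trans hlow hcx
    rw [← EReal.coe_mul, ← EReal.coe_mul, ← EReal.coe_add] at hcomb
    have hpt : ((1-t) • ((x, xs) : X × StrongDual ℝ X) + t • ((z, zs) : X × StrongDual ℝ X))
        = ((1-t)•x + t•z, (1-t)•xs + t•zs) := rfl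
    rw [hpt] at hcomb
    rw [EReal.coe_le_coe_iff] at hcomb
    simp only [ContinuousLinearMap.add_apply, ContinuousLinearMap.smul_apply, smul_eq_mul,
      map_add, map_smul] at hcomb
    have key : t * ((1-t)*(xs z + zs x - xs x) + t*(zs z)) ≤ t * H := by nlinarith [hcomb]
    exact le_of_mul_le_mul_left key ht
  have hc : ∀ t : ℝ, 0 < t → t ≤ 1/2 →
      (1-t)*((1-t)*(p.2 z + p.1 zs - p.1 p.2) + t*(zs z)) + t*(zs z) ≤ H := by
    intro t ht ht2
    by_contra hcon
    push_neg at hcon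
    have h1t : (0:ℝ) < 1 - t := by linarith
    have hεpos : 0 < ((1-t)*((1-t)*(p.2 z + p.1 zs - p.1 p.2) + t*(zs z)) + t*(zs z) - H) / (1-t) :=
      div_pos (by linarith) h1t
    obtain ⟨x, xs, hxT, hD⟩ := hb t ht (by linarith) _ hεpos
    have hA := ha x xs hxT t ht (by linarith)
    have hmul := mul_lt_mul_of_pos_left hD h1t
    have hfield : (1-t) * (((1-t)*((1-t)*(p.2 z + p.1 zs - p.1 p.2) + t*(zs z)) + t*(zs z) - H) / (1-t))
        = (1-t)*((1-t)*(p.2 z + p.1 zs - p.1 p.2) + t*(zs z)) + t*(zs z) - H := by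
      field_simp
    nlinarith [hmul, hA]
  refine aux_lim (fun t => (1-t)*((1-t)*(p.2 z + p.1 zs - p.1 p.2) + t*(zs z)) + t*(zs z))
    (by fun_prop) (by norm_num) hc

theorem statement19 {X : Type*} [NormedAddCommGroup X] [NormedSpace ℝ X] [CompleteSpace X]
    (T : Set (X × StrongDual ℝ X)) (hT : IsMaxMonotoneOp T) (hni : IsNI T)
    (hconj : ∀ h, InFitzFam T h →
      ∀ p : StrongDual ℝ X × StrongDual ℝ (StrongDual ℝ X), ((p.2 p.1 : ℝ) : EReal) ≤ pconj h p)
    (h : X × StrongDual ℝ X → EReal) (hh : InFitzFam T h)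
    (p : StrongDual ℝ (StrongDual ℝ X) × StrongDual ℝ X) (hp : p ∈ gossezClosure T) :
    pconj2 (pconj h) p = ((p.1 p.2 : ℝ) : EReal) := by
  have L1 : ∀ z zs, ((p.2 z + p.1 zs - p.1 p.2 : ℝ) : EReal) ≤ h (z, zs) :=
    key_L1 T hni h hh p (fun q hq => hp q hq)
  have L2 : pconj h (p.2, p.1) = ((p.1 p.2 : ℝ) : EReal) := by
    apply le_antisymm
    · simp only [pconj]
      refine iSup_le ?_
      rintro ⟨z, zs⟩
      exact aux_sub (L1 z zs)
    · simpa using hconj h hh (p.2, p.1)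
  have L3 : ∀ (q1 : StrongDual ℝ X) (q2 : StrongDual ℝ (StrongDual ℝ X)),
      ((p.1 q1 + q2 p.2 - p.1 p.2 : ℝ) : EReal) ≤ pconj h (q1, q2) := by
    intro q1 q2
    by_cases htop : pconj h (q1, q2) = ⊤
    · rw [htop]; exact le_top
    have hπq : ((q2 q1 : ℝ) : EReal) ≤ pconj h (q1, q2) := hconj h hh (q1, q2)
    have hbot : pconj h (q1, q2) ≠ ⊥ := by
      intro hb; rw [hb] at hπq; exact EReal.coe_ne_bot _ (le_bot_iff.mp hπq)
    have hG : pconj h (q1, q2) = (((pconj h (q1, q2)).toReal : ℝ) : EReal) :=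
      (EReal.coe_toReal htop hbot).symm
    set G : ℝ := (pconj h (q1, q2)).toReal with hGdef
    rw [hG, EReal.coe_le_coe_iff]
    have hstep : ∀ t : ℝ, 0 < t → t ≤ 1 →
        (1-t)*(p.1 q1 + q2 p.2 - p.1 p.2) + t*(q2 q1) ≤ G := by
      intro t ht ht1
      have hc1 : ((((1-t) • p.1 + t • q2) ((1-t) • p.2 + t • q1) : ℝ) : EReal)
          ≤ pconj h ((1-t) • p.2 + t • q1, (1-t) • p.1 + t • q2) :=
        hconj h hh ((1-t) • p.2 + t • q1, (1-t) • p.1 + t • q2)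
      have hc2 : pconj h ((1-t) • p.2 + t • q1, (1-t) • p.1 + t • q2)
          ≤ (((1-t)*(p.1 p.2) + t*G : ℝ) : EReal) := by
        simp only [pconj]
        refine iSup_le ?_
        rintro ⟨w1, w2⟩
        by_cases hwt : h (w1, w2) = ⊤
        · rw [hwt]; simp
        have hwb : h (w1, w2) ≠ ⊥ := by
          intro hb
          have h5 := hh.2.2.1 (w1, w2); rw [hb] at h5
          exact EReal.coe_ne_bot _ (le_bot_iff.mp h5)
        have hHw : h (w1, w2) = (((h (w1, w2)).toReal : ℝ) : EReal) :=
          (EReal.coe_toReal hwt hwb).symm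
        set Hw : ℝ := (h (w1, w2)).toReal with hHwdef
        have e1 : p.2 w1 + p.1 w2 - p.1 p.2 ≤ Hw := by
          have h6 := L1 w1 w2; rw [hHw] at h6; exact_mod_cast h6
        have e2 : q1 w1 + q2 w2 - Hw ≤ G := by
          have h3 : ((q1 w1 + q2 w2 : ℝ) : EReal) - h (w1, w2) ≤ pconj h (q1, q2) :=
            le_iSup (fun w : X × StrongDual ℝ X => ((q1 w.1 + q2 w.2 : ℝ) : EReal) - h w) (w1, w2)
          rw [hHw, hG, ← EReal.coe_sub, EReal.coe_le_coe_iff] at h3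
          exact h3
        rw [hHw, ← EReal.coe_sub, EReal.coe_le_coe_iff]
        simp only [ContinuousLinearMap.add_apply, ContinuousLinearMap.smul_apply, smul_eq_mul]
        nlinarith [mul_le_mul_of_nonneg_left e1 (by linarith : (0:ℝ) ≤ 1-t),
          mul_le_mul_of_nonneg_left e2 ht.le]
      have hcomb := le_trans hc1 hc2
      have hcomb2 : ((1-t) • p.1 + t • q2) ((1-t) • p.2 + t • q1) ≤ (1-t)*(p.1 p.2) + t*G :=
        EReal.coe_le_coe_iff.mp hcomb
      simp only [ContinuousLinearMap.add_apply, ContinuousLinearMap.smul_apply, smul_eq_mul,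
        map_add, map_smul] at hcomb2
      have hM : q2 q1 ≤ G := by
        rw [hG] at hπq; exact_mod_cast hπq
      have key : t * ((1-t)*(p.1 q1 + q2 p.2 - p.1 p.2) + t*(q2 q1)) ≤ t * G := by
        nlinarith [hcomb2]
      exact le_of_mul_le_mul_left key ht
    refine aux_lim (fun t => (1-t)*(p.1 q1 + q2 p.2 - p.1 p.2) + t*(q2 q1))
      (by fun_prop) (by norm_num) ?_
    intro t ht ht2
    exact hstep t ht (by linarith)
  apply le_antisymm
  · simp only [pconj2]
    refine iSup_le ?_
    rintro ⟨q1, q2⟩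
    exact aux_sub (L3 q1 q2)
  · have h4 : ((p.1 p.2 + p.1 p.2 : ℝ) : EReal) - pconj h (p.2, p.1) = ((p.1 p.2 : ℝ) : EReal) := by
      rw [L2, ← EReal.coe_sub]
      norm_num
    calc ((p.1 p.2 : ℝ) : EReal)
        = ((p.1 p.2 + p.1 p.2 : ℝ) : EReal) - pconj h (p.2, p.1) := h4.symm
      _ ≤ pconj2 (pconj h) p :=
        le_iSup (fun q : StrongDual ℝ X × StrongDual ℝ (StrongDual ℝ X) =>
          ((p.1 q.1 + q.2 p.2 : ℝ) : EReal) - pconj h q) (p.2, p.1)
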